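/- In the limiting dynamical system, for every n ≥ 0 and every time t in the open interval (s_n, s_{n+1}), the index m_n is the unique j ∈ ℕ with y_j(t) = α + ρ t/γ. In particular, at every time t < t* outside the countable set {s_n : n ≥ 0} there is a unique dominant type. -/
import Mathlib


namespace SelectiveSweeps

noncomputable section

/-- `γ_j = (1+γ)^j − 1` for `j ∈ ℤ`. -/
def gam (γ : ℝ) (j : ℤ) : ℝ := (1 + γ) ^ j - 1

/-- `λ_j = (1+ρ)(1+γ)^j − 1` for `j ∈ ℤ`. -/
def lam (γ ρ : ℝ) (j : ℤ) : ℝ := (1 + ρ) * (1 + γ) ^ j - 1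

/-- A state of the recursion: the time `s_n` together with the values `y_j(s_n)`, `j ∈ ℕ`. -/
structure St where
  s : ℝ
  y : ℕ → ℝ

/-- `α_n = α + ρ s_n / γ`. -/
def alphaOf (γ ρ α : ℝ) (σ : St) : ℝ := α + ρ * σ.s / γ

/-- `m_n = max {j : y_j(s_n) = α_n}`. -/
def mOf (γ ρ α : ℝ) (σ : St) : ℕ := sSup {j : ℕ | σ.y j = alphaOf γ ρ α σ}

/-- `k_n = max {j : y_j(s_n) > 0}`. -/
def kOf (σ : St) : ℕ := sSup {j : ℕ | 0 < σ.y j}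

/-- `k_n^* = k_n` if `y_{k_n}(s_n) < 1`, and `k_n + 1` if `y_{k_n}(s_n) = 1`. -/
def kstarOf (σ : St) : ℕ := if σ.y (kOf σ) < 1 then kOf σ else kOf σ + 1

/-- `δ_{n,j}`:  `(α_n − y_j(s_n))·γ/(λ_{j−m_n} − ρ)` for `m_n < j < k_n^*` and
`(1 − y_{k_n^*}(s_n))·γ/λ_{k_n^*−m_n}` for `j = k_n^*`. -/
def deltaOf (γ ρ α : ℝ) (σ : St) (j : ℕ) : ℝ :=
  if j = kstarOf σ then
    (1 - σ.y (kstarOf σ)) * γ / lam γ ρ ((kstarOf σ : ℤ) - (mOf γ ρ α σ : ℤ))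
  else
    (alphaOf γ ρ α σ - σ.y j) * γ / (lam γ ρ ((j : ℤ) - (mOf γ ρ α σ : ℤ)) - ρ)

/-- `Δ_n = min {δ_{n,j} : m_n < j ≤ k_n^*}`. -/
def DeltaOf (γ ρ α : ℝ) (σ : St) : ℝ :=
  sInf (deltaOf γ ρ α σ '' Set.Ioc (mOf γ ρ α σ) (kstarOf σ))

/-- One step of the recursion: `s_{n+1} = s_n + Δ_n` and, evaluating
`y_j(s_n + t) = max (y_j(s_n) + t·λ_{j−m_n}/γ) 0` (for `j ≤ k_n^*`; `0` for `j > k_n^*`)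
at `t = Δ_n`, the new values `y_j(s_{n+1})`. -/
def step (γ ρ α : ℝ) (σ : St) : St where
  s := σ.s + DeltaOf γ ρ α σ
  y := fun j =>
    if j ≤ kstarOf σ then
      max (σ.y j + DeltaOf γ ρ α σ * lam γ ρ ((j : ℤ) - (mOf γ ρ α σ : ℤ)) / γ) 0
    else 0

/-- The state after `n` steps: `(state γ ρ α n).s = s_n` and `(state γ ρ α n).y j = y_j(s_n)`.
Initially `s_0 = 0` and `y_j(0) = max (α − j) 0`. -/
def state (γ ρ α : ℝ) (n : ℕ) : St :=
  (step γ ρ α)^[n] ⟨0, fun j => max (α - j) 0⟩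

/-- The index `n` of the interval `[s_n, s_{n+1}]` used to evaluate `y_j` at time `t`. -/
def idxAt (γ ρ α : ℝ) (t : ℝ) : ℕ := sInf {n : ℕ | t < (state γ ρ α (n + 1)).s}

/-- `y_j(t)`, evaluated via the piecewise linear recursion: for `s_n ≤ t ≤ s_{n+1}`,
`y_j(t) = max (y_j(s_n) + (t − s_n)·λ_{j−m_n}/γ) 0` for `j ≤ k_n^*`, and `0` for `j > k_n^*`. -/
def yAt (γ ρ α : ℝ) (j : ℕ) (t : ℝ) : ℝ :=
  let σ := state γ ρ α (idxAt γ ρ α t)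
  if j ≤ kstarOf σ then
    max (σ.y j + (t - σ.s) * lam γ ρ ((j : ℤ) - (mOf γ ρ α σ : ℤ)) / γ) 0
  else 0

/-- Conditions (i)–(ii) at a state: (i) the sets defining `m_n` and `k_n` are nonempty and
bounded, `y_j(s_n) ≤ α_n` for all `j`, and `y_j(s_n) > 0` for `m_n ≤ j ≤ k_n`;
(ii) `y_{j+1}(s_n) ≥ y_j(s_n) − 1` for all `0 ≤ j ≤ k_n`. -/
def Cond (γ ρ α : ℝ) (σ : St) : Prop :=
  {j : ℕ | σ.y j = alphaOf γ ρ α σ}.Nonempty ∧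
  BddAbove {j : ℕ | σ.y j = alphaOf γ ρ α σ} ∧
  {j : ℕ | 0 < σ.y j}.Nonempty ∧
  BddAbove {j : ℕ | 0 < σ.y j} ∧
  (∀ j : ℕ, σ.y j ≤ alphaOf γ ρ α σ) ∧
  (∀ j : ℕ, mOf γ ρ α σ ≤ j → j ≤ kOf σ → 0 < σ.y j) ∧
  (∀ j : ℕ, j ≤ kOf σ → σ.y j - 1 ≤ σ.y (j + 1))

/-- `t_j = inf { t ∈ [0, t*) : y_j(t) = 1 }`, where `t < t* = Σ_n Δ_n = sup_n s_n` is
expressed as `∃ n, t < s_n`. -/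
def tHit (γ ρ α : ℝ) (j : ℕ) : ℝ :=
  sInf {t : ℝ | 0 ≤ t ∧ (∃ n : ℕ, t < (state γ ρ α n).s) ∧ yAt γ ρ α j t = 1}


/-! ### Auxiliary development -/

variable {γ ρ α : ℝ}

lemma lam_sub_rho (γ ρ : ℝ) (d : ℤ) : lam γ ρ d - ρ = (1 + ρ) * ((1 + γ) ^ d - 1) := by
  simp [lam]; ring

lemma lam_zero : lam γ ρ 0 = ρ := by simp [lam]

lemma lam_gt_rho (hγ : 0 < γ) (hρ : 0 ≤ ρ) {d : ℤ} (hd : 0 < d) : ρ < lam γ ρ d := by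
  have h1 : (1:ℝ) < (1 + γ) ^ d := one_lt_zpow₀ (by linarith) (by omega)
  nlinarith [lam_sub_rho γ ρ d]

lemma lam_pos (hγ : 0 < γ) (hρ : 0 ≤ ρ) {d : ℤ} (hd : 0 < d) : 0 < lam γ ρ d :=
  lt_of_le_of_lt hρ (lam_gt_rho hγ hρ hd)

lemma lam_lt_rho (hγ : 0 < γ) (hρ : 0 ≤ ρ) {d : ℤ} (hd : d < 0) : lam γ ρ d < ρ := by
  have h1 : (1 + γ) ^ d < 1 := zpow_lt_one_of_neg₀ (by linarith) hd -- check name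
  nlinarith [lam_sub_rho γ ρ d]

lemma lam_le_rho (hγ : 0 < γ) (hρ : 0 ≤ ρ) {d : ℤ} (hd : d ≤ 0) : lam γ ρ d ≤ ρ := by
  rcases eq_or_lt_of_le hd with h | h
  · simp [h, lam_zero]
  · exact (lam_lt_rho hγ hρ h).le

lemma lam_mono (hγ : 0 < γ) (hρ : 0 ≤ ρ) {d e : ℤ} (hd : d ≤ e) : lam γ ρ d ≤ lam γ ρ e := by
  have h := zpow_le_zpow_right₀ (a := 1 + γ) (by linarith : (1:ℝ) ≤ 1 + γ) hd
  have := mul_le_mul_of_nonneg_left h (by linarith : (0:ℝ) ≤ 1 + ρ)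
  simp only [lam]; linarith

/-- The inductive invariant. -/
def Inv (γ ρ α : ℝ) (σ : St) : Prop :=
  Cond γ ρ α σ ∧ 0 ≤ σ.s ∧ (∀ j, 0 ≤ σ.y j) ∧ mOf γ ρ α σ < kOf σ ∧ σ.y (kOf σ) ≤ 1

section InvFacts

variable {σ : St} (hγ : 0 < γ) (hρ : 0 ≤ ρ) (hα : 1 < α)

lemma max_sub_one {a b : ℝ} (h : a - 1 ≤ b) : max a 0 - 1 ≤ max b 0 := by
  rcases le_total a 1 with h1 | h1
  · have : max a 0 ≤ 1 := max_le h1 (by norm_num)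
    have : (0:ℝ) ≤ max b 0 := le_max_right _ _
    linarith
  · have : max a 0 = a := max_eq_left (by linarith)
    have : b ≤ max b 0 := le_max_left _ _
    linarith [max_eq_left (show (0:ℝ) ≤ a by linarith)]

include hγ hρ hα

lemma one_lt_alpha (hI : Inv γ ρ α σ) : 1 < alphaOf γ ρ α σ := by
  have hs := hI.2.1
  have : 0 ≤ ρ * σ.s / γ := div_nonneg (mul_nonneg hρ hs) hγ.le
  unfold alphaOf; linarith

omit hγ hρ hα

lemma y_m_eq (hI : Inv γ ρ α σ) : σ.y (mOf γ ρ α σ) = alphaOf γ ρ α σ :=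
  Nat.sSup_mem hI.1.1 hI.1.2.1

lemma le_m_of_eq (hI : Inv γ ρ α σ) {j : ℕ} (h : σ.y j = alphaOf γ ρ α σ) :
    j ≤ mOf γ ρ α σ := le_csSup hI.1.2.1 h

lemma y_k_pos (hI : Inv γ ρ α σ) : 0 < σ.y (kOf σ) :=
  Nat.sSup_mem hI.1.2.2.1 hI.1.2.2.2.1

lemma le_k_of_pos (hI : Inv γ ρ α σ) {j : ℕ} (h : 0 < σ.y j) : j ≤ kOf σ :=
  le_csSup hI.1.2.2.2.1 h

lemma y_eq_zero_of_gt_k (hI : Inv γ ρ α σ) {j : ℕ} (h : kOf σ < j) : σ.y j = 0 := by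
  rcases eq_or_lt_of_le (hI.2.2.1 j) with h' | h'
  · exact h'.symm
  · exact absurd (le_k_of_pos hI h') (by omega)

lemma k_le_kstar (σ : St) : kOf σ ≤ kstarOf σ := by
  unfold kstarOf; split <;> omega

lemma kstar_le (σ : St) : kstarOf σ ≤ kOf σ + 1 := by
  unfold kstarOf; split <;> omega

lemma m_lt_kstar (hI : Inv γ ρ α σ) : mOf γ ρ α σ < kstarOf σ :=
  lt_of_lt_of_le hI.2.2.2.1 (k_le_kstar σ)

lemma y_kstar_lt_one (hI : Inv γ ρ α σ) : σ.y (kstarOf σ) < 1 := by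
  unfold kstarOf; split
  · assumption
  · rw [y_eq_zero_of_gt_k hI (by omega)]; norm_num

lemma y_lt_alpha_of_gt_m (hI : Inv γ ρ α σ) {j : ℕ} (h : mOf γ ρ α σ < j) :
    σ.y j < alphaOf γ ρ α σ := by
  rcases eq_or_lt_of_le (hI.1.2.2.2.2.1 j) with h' | h'
  · exact absurd (le_m_of_eq hI h') (by omega)
  · exact h'

include hγ hρ

lemma delta_pos (hI : Inv γ ρ α σ) {j : ℕ}
    (hj : j ∈ Set.Ioc (mOf γ ρ α σ) (kstarOf σ)) : 0 < deltaOf γ ρ α σ j := by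
  obtain ⟨hj1, hj2⟩ := hj
  by_cases h : j = kstarOf σ
  · rw [deltaOf, if_pos h]
    have h1 : σ.y (kstarOf σ) < 1 := y_kstar_lt_one hI
    have h2 : 0 < lam γ ρ ((kstarOf σ : ℤ) - (mOf γ ρ α σ : ℤ)) :=
      lam_pos hγ hρ (by have := m_lt_kstar hI; omega)
    exact div_pos (mul_pos (by linarith) hγ) h2
  · rw [deltaOf, if_neg h]
    have h1 : σ.y j < alphaOf γ ρ α σ := y_lt_alpha_of_gt_m hI hj1
    have h2 : ρ < lam γ ρ ((j : ℤ) - (mOf γ ρ α σ : ℤ)) := lam_gt_rho hγ hρ (by omega)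
    exact div_pos (mul_pos (by linarith) hγ) (by linarith)

lemma Delta_mem (hI : Inv γ ρ α σ) :
    ∃ j ∈ Set.Ioc (mOf γ ρ α σ) (kstarOf σ), DeltaOf γ ρ α σ = deltaOf γ ρ α σ j := by
  have hne : (deltaOf γ ρ α σ '' Set.Ioc (mOf γ ρ α σ) (kstarOf σ)).Nonempty :=
    (Set.nonempty_Ioc.mpr (m_lt_kstar hI)).image _
  have hfin : (deltaOf γ ρ α σ '' Set.Ioc (mOf γ ρ α σ) (kstarOf σ)).Finite :=
    (Set.finite_Ioc _ _).image _
  obtain ⟨j, hj, hje⟩ := hne.csInf_mem hfin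
  exact ⟨j, hj, hje.symm⟩

lemma Delta_pos (hI : Inv γ ρ α σ) : 0 < DeltaOf γ ρ α σ := by
  obtain ⟨j, hj, hje⟩ := Delta_mem hγ hρ hI
  rw [hje]; exact delta_pos hγ hρ hI hj

omit hγ hρ

lemma Delta_le (hI : Inv γ ρ α σ) {j : ℕ}
    (hj : j ∈ Set.Ioc (mOf γ ρ α σ) (kstarOf σ)) :
    DeltaOf γ ρ α σ ≤ deltaOf γ ρ α σ j := by
  have hfin : (deltaOf γ ρ α σ '' Set.Ioc (mOf γ ρ α σ) (kstarOf σ)).Finite :=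
    (Set.finite_Ioc _ _).image _
  exact csInf_le hfin.bddBelow (Set.mem_image_of_mem _ hj)

include hγ hρ

/-- Linear value stays below the dominant line, middle indices, weak form. -/
lemma lin_le_dom (hI : Inv γ ρ α σ) {j : ℕ} (hm : mOf γ ρ α σ < j)
    (hne : j ≠ kstarOf σ) {t : ℝ} (ht : t ≤ deltaOf γ ρ α σ j) :
    σ.y j + t * lam γ ρ ((j : ℤ) - (mOf γ ρ α σ : ℤ)) / γ ≤
      alphaOf γ ρ α σ + t * ρ / γ := by
  set L := lam γ ρ ((j : ℤ) - (mOf γ ρ α σ : ℤ)) with hL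
  have hden : 0 < L - ρ := by
    have := lam_gt_rho hγ hρ (d := (j : ℤ) - (mOf γ ρ α σ : ℤ)) (by omega); linarith
  rw [deltaOf, if_neg hne] at ht
  have h1 : t * (L - ρ) ≤ (alphaOf γ ρ α σ - σ.y j) * γ := (le_div_iff₀ hden).mp ht
  have h2 : t * (L - ρ) / γ ≤ alphaOf γ ρ α σ - σ.y j := by
    rw [div_le_iff₀ hγ]; linarith
  have h3 : t * L / γ - t * ρ / γ = t * (L - ρ) / γ := by ring
  linarith

lemma lin_lt_dom (hI : Inv γ ρ α σ) {j : ℕ} (hm : mOf γ ρ α σ < j)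
    (hne : j ≠ kstarOf σ) {t : ℝ} (ht : t < deltaOf γ ρ α σ j) :
    σ.y j + t * lam γ ρ ((j : ℤ) - (mOf γ ρ α σ : ℤ)) / γ <
      alphaOf γ ρ α σ + t * ρ / γ := by
  set L := lam γ ρ ((j : ℤ) - (mOf γ ρ α σ : ℤ)) with hL
  have hden : 0 < L - ρ := by
    have := lam_gt_rho hγ hρ (d := (j : ℤ) - (mOf γ ρ α σ : ℤ)) (by omega); linarith
  rw [deltaOf, if_neg hne] at ht
  have h1 : t * (L - ρ) < (alphaOf γ ρ α σ - σ.y j) * γ := (lt_div_iff₀ hden).mp ht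
  have h2 : t * (L - ρ) / γ < alphaOf γ ρ α σ - σ.y j := by
    rw [div_lt_iff₀ hγ]; linarith
  have h3 : t * L / γ - t * ρ / γ = t * (L - ρ) / γ := by ring
  linarith

/-- Linear value at `k*` stays below `1`, weak form. -/
lemma lin_kstar_le_one (hI : Inv γ ρ α σ) {t : ℝ}
    (ht : t ≤ deltaOf γ ρ α σ (kstarOf σ)) :
    σ.y (kstarOf σ) + t * lam γ ρ ((kstarOf σ : ℤ) - (mOf γ ρ α σ : ℤ)) / γ ≤ 1 := by
  set L := lam γ ρ ((kstarOf σ : ℤ) - (mOf γ ρ α σ : ℤ)) with hL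
  have hden : 0 < L := lam_pos hγ hρ (by have := m_lt_kstar hI; omega)
  rw [deltaOf, if_pos rfl] at ht
  have h1 : t * L ≤ (1 - σ.y (kstarOf σ)) * γ := (le_div_iff₀ hden).mp ht
  have h2 : t * L / γ ≤ 1 - σ.y (kstarOf σ) := by rw [div_le_iff₀ hγ]; linarith
  linarith

lemma lin_kstar_lt_one (hI : Inv γ ρ α σ) {t : ℝ}
    (ht : t < deltaOf γ ρ α σ (kstarOf σ)) :
    σ.y (kstarOf σ) + t * lam γ ρ ((kstarOf σ : ℤ) - (mOf γ ρ α σ : ℤ)) / γ < 1 := by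
  set L := lam γ ρ ((kstarOf σ : ℤ) - (mOf γ ρ α σ : ℤ)) with hL
  have hden : 0 < L := lam_pos hγ hρ (by have := m_lt_kstar hI; omega)
  rw [deltaOf, if_pos rfl] at ht
  have h1 : t * L < (1 - σ.y (kstarOf σ)) * γ := (lt_div_iff₀ hden).mp ht
  have h2 : t * L / γ < 1 - σ.y (kstarOf σ) := by rw [div_lt_iff₀ hγ]; linarith
  linarith

/-- Low indices stay below the dominant line. -/
lemma lin_le_dom_low (hI : Inv γ ρ α σ) {j : ℕ} (hm : j ≤ mOf γ ρ α σ) {t : ℝ}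
    (ht : 0 ≤ t) :
    σ.y j + t * lam γ ρ ((j : ℤ) - (mOf γ ρ α σ : ℤ)) / γ ≤
      alphaOf γ ρ α σ + t * ρ / γ := by
  have h1 : σ.y j ≤ alphaOf γ ρ α σ := hI.1.2.2.2.2.1 j
  have h2 : lam γ ρ ((j : ℤ) - (mOf γ ρ α σ : ℤ)) ≤ ρ := lam_le_rho hγ hρ (by omega)
  have h3 : t * lam γ ρ ((j : ℤ) - (mOf γ ρ α σ : ℤ)) / γ ≤ t * ρ / γ :=
    (div_le_div_iff_of_pos_right hγ).mpr (by nlinarith)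
  linarith

lemma lin_lt_dom_low (hI : Inv γ ρ α σ) {j : ℕ} (hm : j < mOf γ ρ α σ) {t : ℝ}
    (ht : 0 < t) :
    σ.y j + t * lam γ ρ ((j : ℤ) - (mOf γ ρ α σ : ℤ)) / γ <
      alphaOf γ ρ α σ + t * ρ / γ := by
  have h1 : σ.y j ≤ alphaOf γ ρ α σ := hI.1.2.2.2.2.1 j
  have h2 : lam γ ρ ((j : ℤ) - (mOf γ ρ α σ : ℤ)) < ρ := lam_lt_rho hγ hρ (by omega)
  have h3 : t * lam γ ρ ((j : ℤ) - (mOf γ ρ α σ : ℤ)) / γ < t * ρ / γ :=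
    (div_lt_div_iff_of_pos_right hγ).mpr (by nlinarith)
  linarith

end InvFacts

section StepInv

variable {σ : St} (hγ : 0 < γ) (hρ : 0 ≤ ρ) (hα : 1 < α)

lemma step_y (σ : St) (j : ℕ) : (step γ ρ α σ).y j =
    if j ≤ kstarOf σ then
      max (σ.y j + DeltaOf γ ρ α σ * lam γ ρ ((j : ℤ) - (mOf γ ρ α σ : ℤ)) / γ) 0
    else 0 := rfl

lemma step_s (σ : St) : (step γ ρ α σ).s = σ.s + DeltaOf γ ρ α σ := rfl

lemma alpha_step (hγ : 0 < γ) (σ : St) : alphaOf γ ρ α (step γ ρ α σ) =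
    alphaOf γ ρ α σ + DeltaOf γ ρ α σ * ρ / γ := by
  simp only [alphaOf, step]; ring

include hγ hρ hα

lemma step_inv (hI : Inv γ ρ α σ) : Inv γ ρ α (step γ ρ α σ) := by
  set m := mOf γ ρ α σ with hm
  set ks := kstarOf σ with hks
  set Δ := DeltaOf γ ρ α σ with hΔ
  set A := alphaOf γ ρ α σ with hA
  have hΔpos : 0 < Δ := Delta_pos hγ hρ hI
  have hmks : m < ks := m_lt_kstar hI
  have hksk : ks ≤ kOf σ + 1 := kstar_le σ
  have hkks : kOf σ ≤ ks := k_le_kstar σ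
  have hA1 : 1 < A := one_lt_alpha hγ hρ hα hI
  have hA' : alphaOf γ ρ α (step γ ρ α σ) = A + Δ * ρ / γ := alpha_step hγ σ
  have hAle : A ≤ A + Δ * ρ / γ := by
    have : 0 ≤ Δ * ρ / γ := div_nonneg (mul_nonneg hΔpos.le hρ) hγ.le
    linarith
  -- the new value of y at m
  have hym : (step γ ρ α σ).y m = A + Δ * ρ / γ := by
    rw [step_y, if_pos hmks.le]
    have : ((m : ℤ) - (m : ℤ)) = 0 := by ring
    rw [this, lam_zero, y_m_eq hI, ← hA]
    exact max_eq_left (by linarith)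
  -- all new values are ≤ new alpha
  have hyle : ∀ j : ℕ, (step γ ρ α σ).y j ≤ A + Δ * ρ / γ := by
    intro j
    rw [step_y]
    split
    · next hj =>
      apply max_le _ (by linarith)
      rcases le_or_gt j m with h | h
      · exact lin_le_dom_low hγ hρ hI h hΔpos.le
      · by_cases hjk : j = ks
        · rw [hjk]
          have h1 := lin_kstar_le_one hγ hρ hI (Delta_le hI ⟨hmks, le_rfl⟩)
          linarith
        · exact lin_le_dom hγ hρ hI h hjk (Delta_le hI ⟨h, by assumption⟩)
    · linarith
  -- new values nonneg
  have hynn : ∀ j : ℕ, 0 ≤ (step γ ρ α σ).y j := by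
    intro j; rw [step_y]; split
    · exact le_max_right _ _
    · exact le_rfl
  -- zero above ks
  have hyz : ∀ j : ℕ, ks < j → (step γ ρ α σ).y j = 0 := by
    intro j hj; rw [step_y, if_neg (by omega)]
  -- positivity on [m, ks]
  have hypos : ∀ j : ℕ, m ≤ j → j ≤ ks → 0 < (step γ ρ α σ).y j := by
    intro j h1 h2
    rw [step_y, if_pos h2]
    rcases le_or_gt j (kOf σ) with h3 | h3
    · have hyj : 0 < σ.y j := hI.1.2.2.2.2.2.1 j h1 h3
      have hlam : 0 ≤ lam γ ρ ((j:ℤ) - (m:ℤ)) := by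
        have := lam_le_rho hγ hρ (d := 0) le_rfl
        have h4 : lam γ ρ 0 ≤ lam γ ρ ((j:ℤ) - (m:ℤ)) := lam_mono hγ hρ (by omega)
        rw [lam_zero] at h4; linarith
      have : 0 ≤ Δ * lam γ ρ ((j:ℤ) - (m:ℤ)) / γ :=
        div_nonneg (mul_nonneg hΔpos.le hlam) hγ.le
      exact lt_max_of_lt_left (by linarith)
    · -- j = ks = kOf + 1
      have hj : j = ks := by omega
      have hy0 : σ.y j = 0 := y_eq_zero_of_gt_k hI h3
      have hlam : 0 < lam γ ρ ((j:ℤ) - (m:ℤ)) := lam_pos hγ hρ (by omega)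
      have : 0 < Δ * lam γ ρ ((j:ℤ) - (m:ℤ)) / γ :=
        div_pos (mul_pos hΔpos hlam) hγ
      exact lt_max_of_lt_left (by linarith)
  -- y at ks is ≤ 1
  have hyks1 : (step γ ρ α σ).y ks ≤ 1 := by
    rw [step_y, if_pos le_rfl]
    apply max_le _ (by norm_num)
    have h1 := lin_kstar_le_one hγ hρ hI (Delta_le hI ⟨hmks, le_rfl⟩)
    simpa [mul_comm] using h1
  -- new k = ks
  have hposks : 0 < (step γ ρ α σ).y ks := hypos ks hmks.le le_rfl
  have hbdd : ∀ j : ℕ, 0 < (step γ ρ α σ).y j → j ≤ ks := by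
    intro j hj
    by_contra h
    rw [hyz j (by omega)] at hj; exact lt_irrefl _ hj
  have hknew : kOf (step γ ρ α σ) = ks := by
    apply le_antisymm
    · exact csSup_le ⟨ks, hposks⟩ hbdd
    · exact le_csSup ⟨ks, fun j hj => hbdd j hj⟩ hposks
  -- tie set facts at new state
  have hAp : 0 < A + Δ * ρ / γ := by linarith
  have htie : ∀ j : ℕ, (step γ ρ α σ).y j = A + Δ * ρ / γ → j < ks := by
    intro j hj
    have h1 : j ≤ ks := hbdd j (by rw [hj]; exact hAp)
    rcases eq_or_lt_of_le h1 with h2 | h2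
    · exfalso; rw [h2] at hj; rw [hj] at hyks1; linarith
    · exact h2
  have hbddtie : BddAbove {j : ℕ | (step γ ρ α σ).y j = alphaOf γ ρ α (step γ ρ α σ)} :=
    ⟨ks, fun j hj => (htie j (by rwa [Set.mem_setOf_eq, hA'] at hj)).le⟩
  have hmemtie : m ∈ {j : ℕ | (step γ ρ α σ).y j = alphaOf γ ρ α (step γ ρ α σ)} := by
    rw [Set.mem_setOf_eq, hA']; exact hym
  have hmnew_mem : (step γ ρ α σ).y (mOf γ ρ α (step γ ρ α σ)) = A + Δ * ρ / γ := by
    have h0 : (step γ ρ α σ).y (mOf γ ρ α (step γ ρ α σ)) = alphaOf γ ρ α (step γ ρ α σ) :=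
      Nat.sSup_mem ⟨m, hmemtie⟩ hbddtie
    exact h0.trans hA' 
  have hmnew_lt : mOf γ ρ α (step γ ρ α σ) < ks := htie _ hmnew_mem
  have hm_le_mnew : m ≤ mOf γ ρ α (step γ ρ α σ) := le_csSup hbddtie hmemtie
  -- condition (ii) at new state
  have hcond2 : ∀ j : ℕ, j ≤ kOf (step γ ρ α σ) →
      (step γ ρ α σ).y j - 1 ≤ (step γ ρ α σ).y (j + 1) := by
    intro j hj
    rw [hknew] at hj
    rcases eq_or_lt_of_le hj with hje | hjlt
    · -- j = ks : new y (ks+1) = 0, new y ks ≤ 1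
      rw [hje, hyz (ks+1) (by omega)]
      linarith
    · -- j + 1 ≤ ks
      rw [step_y, step_y, if_pos (by omega : j ≤ ks), if_pos (by omega : j + 1 ≤ ks)]
      apply max_sub_one
      have h1 : σ.y j - 1 ≤ σ.y (j + 1) := hI.1.2.2.2.2.2.2 j (by omega)
      have h2 : lam γ ρ ((j:ℤ) - (m:ℤ)) ≤ lam γ ρ (((j:ℕ)+1:ℤ) - (m:ℤ)) :=
        lam_mono hγ hρ (by omega)
      have h3 : Δ * lam γ ρ ((j:ℤ) - (m:ℤ)) / γ ≤ Δ * lam γ ρ (((j:ℕ)+1:ℤ) - (m:ℤ)) / γ :=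
        (div_le_div_iff_of_pos_right hγ).mpr (by nlinarith)
      push_cast
      push_cast at h3
      linarith
  refine ⟨⟨⟨m, hmemtie⟩,
    hbddtie,
    ⟨m, by rw [Set.mem_setOf_eq, hym]; exact hAp⟩,
    ⟨ks, fun j hj => hbdd j hj⟩,
    fun j => by rw [hA']; exact hyle j,
    fun j h1 h2 => hypos j (le_trans hm_le_mnew h1) (by rw [hknew] at h2; exact h2),
    hcond2⟩,
    by rw [step_s]; linarith [hI.2.1],
    hynn,
    by rw [hknew]; exact hmnew_lt,
    by rw [hknew]; exact hyks1⟩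

end StepInv

section Base

variable (hγ : 0 < γ) (hρ : 0 ≤ ρ) (hα : 1 < α)

include hγ hρ hα

lemma base_inv : Inv γ ρ α (⟨0, fun j => max (α - j) 0⟩ : St) := by
  set σ0 : St := ⟨0, fun j => max (α - j) 0⟩ with hσ0
  have hy0 : ∀ j : ℕ, σ0.y j = max (α - j) 0 := fun j => rfl
  have hA0 : alphaOf γ ρ α σ0 = α := by simp [alphaOf, hσ0]
  have hα0 : (0:ℝ) < α := by linarith
  have htie : ∀ j : ℕ, σ0.y j = alphaOf γ ρ α σ0 ↔ j = 0 := by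
    intro j
    rw [hy0, hA0]
    constructor
    · intro h; by_contra hj
      have hj1 : (1:ℝ) ≤ (j:ℝ) := by exact_mod_cast Nat.one_le_iff_ne_zero.mpr hj
      rcases le_total (α - j) 0 with h1 | h1
      · rw [max_eq_right h1] at h; linarith
      · rw [max_eq_left h1] at h; linarith
    · rintro rfl; simp only [Nat.cast_zero, sub_zero]; exact max_eq_left hα0.le
  have hpos : ∀ j : ℕ, 0 < σ0.y j ↔ (j:ℝ) < α := by
    intro j
    rw [hy0, lt_max_iff]
    constructor
    · rintro (h | h)
      · linarith
      · exact absurd h (lt_irrefl 0)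
    · intro h; left; linarith
  have hbddpos : BddAbove {j : ℕ | 0 < σ0.y j} := by
    refine ⟨⌈α⌉₊, fun j hj => ?_⟩
    rw [Set.mem_setOf_eq, hpos] at hj
    exact_mod_cast (hj.trans_le (Nat.le_ceil α)).le
  have hbddtie : BddAbove {j : ℕ | σ0.y j = alphaOf γ ρ α σ0} :=
    ⟨0, fun j hj => by rw [Set.mem_setOf_eq, htie] at hj; omega⟩
  have hm0 : mOf γ ρ α σ0 = 0 := by
    have h0 := Nat.sSup_mem (⟨0, by rw [Set.mem_setOf_eq, htie]⟩ :
      {j : ℕ | σ0.y j = alphaOf γ ρ α σ0}.Nonempty) hbddtie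
    rw [Set.mem_setOf_eq, htie] at h0
    exact h0
  have h1pos : (1:ℕ) ∈ {j : ℕ | 0 < σ0.y j} := by
    rw [Set.mem_setOf_eq, hpos]; exact_mod_cast hα
  have hk1 : 1 ≤ kOf σ0 := le_csSup hbddpos h1pos
  have hkmem : (kOf σ0 : ℝ) < α := by
    have := Nat.sSup_mem ⟨1, h1pos⟩ hbddpos
    rwa [Set.mem_setOf_eq, hpos] at this
  have hknot : ¬ ((kOf σ0 + 1 : ℕ) : ℝ) < α := by
    intro h
    have : (kOf σ0 + 1 : ℕ) ∈ {j : ℕ | 0 < σ0.y j} := by rw [Set.mem_setOf_eq, hpos]; exact h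
    exact absurd (le_csSup hbddpos this : kOf σ0 + 1 ≤ kOf σ0) (Nat.not_succ_le_self _)
  have hk1' : α - kOf σ0 ≤ 1 := by push_neg at hknot; push_cast at hknot; linarith
  refine ⟨⟨⟨0, by rw [Set.mem_setOf_eq, htie]⟩, hbddtie, ⟨1, h1pos⟩, hbddpos,
    fun j => ?_, fun j h1 h2 => ?_, fun j _ => ?_⟩, le_rfl, fun j => le_max_right _ _,
    by rw [hm0]; omega, ?_⟩
  · rw [hy0, hA0]
    apply max_le _ hα0.le
    have : (0:ℝ) ≤ (j:ℝ) := Nat.cast_nonneg j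
    linarith
  · rw [hpos]
    have : (j:ℝ) ≤ (kOf σ0 : ℝ) := by exact_mod_cast h2
    linarith
  · rw [hy0, hy0]
    apply max_sub_one
    push_cast
    linarith
  · rw [hy0]
    apply max_le _ (by norm_num)
    exact hk1'

omit hγ hρ hα in
lemma state_succ (n : ℕ) : state γ ρ α (n + 1) = step γ ρ α (state γ ρ α n) :=
  Function.iterate_succ_apply' _ _ _

lemma state_inv : ∀ n : ℕ, Inv γ ρ α (state γ ρ α n) := by
  intro n
  induction n with
  | zero => exact base_inv hγ hρ hα
  | succ n ih => rw [state_succ]; exact step_inv hγ hρ hα ih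

omit hγ hρ hα in
lemma s_succ (n : ℕ) :
    (state γ ρ α (n + 1)).s = (state γ ρ α n).s + DeltaOf γ ρ α (state γ ρ α n) := by
  rw [state_succ]; rfl

lemma s_strictMono : StrictMono (fun n => (state γ ρ α n).s) := by
  apply strictMono_nat_of_lt_succ
  intro n
  have := Delta_pos hγ hρ (state_inv hγ hρ hα n)
  simp only [s_succ]
  linarith

lemma idxAt_eq {n : ℕ} {t : ℝ} (h1 : (state γ ρ α n).s < t)
    (h2 : t < (state γ ρ α (n + 1)).s) : idxAt γ ρ α t = n := by
  apply le_antisymm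
  · exact Nat.sInf_le h2
  · apply le_csInf ⟨n, h2⟩
    intro b hb
    by_contra hbn
    push_neg at hbn
    have hle : (state γ ρ α (b + 1)).s ≤ (state γ ρ α n).s :=
      (s_strictMono hγ hρ hα).monotone (by omega)
    exact absurd hb (not_lt.mpr (hle.trans h1.le))

lemma eval_interval (n : ℕ) (t : ℝ) (h1 : (state γ ρ α n).s < t)
    (h2 : t < (state γ ρ α (n + 1)).s) (j : ℕ) :
    yAt γ ρ α j t = α + ρ * t / γ ↔ j = mOf γ ρ α (state γ ρ α n) := by
  have hI := state_inv hγ hρ hα n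
  set σ := state γ ρ α n with hσ
  have hidx : idxAt γ ρ α t = n := idxAt_eq hγ hρ hα h1 h2
  have hy : yAt γ ρ α j t =
      if j ≤ kstarOf σ then
        max (σ.y j + (t - σ.s) * lam γ ρ ((j : ℤ) - (mOf γ ρ α σ : ℤ)) / γ) 0
      else 0 := by
    unfold yAt; rw [hidx]
  have hu : 0 < t - σ.s := by linarith
  have hu2 : t - σ.s < DeltaOf γ ρ α σ := by
    have hs1 : (state γ ρ α (n + 1)).s = σ.s + DeltaOf γ ρ α σ := s_succ n
    linarith [h2.trans_eq hs1]
  have hdom : α + ρ * t / γ = alphaOf γ ρ α σ + (t - σ.s) * ρ / γ := by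
    show α + ρ * t / γ = (α + ρ * σ.s / γ) + (t - σ.s) * ρ / γ
    ring
  have hA1 : 1 < alphaOf γ ρ α σ := one_lt_alpha hγ hρ hα hI
  have hnn : 0 ≤ (t - σ.s) * ρ / γ := div_nonneg (mul_nonneg hu.le hρ) hγ.le
  have hApos : 0 < alphaOf γ ρ α σ + (t - σ.s) * ρ / γ := by linarith
  constructor
  · intro hval
    by_contra hj
    have hlt : yAt γ ρ α j t < α + ρ * t / γ := by
      rw [hy, hdom]
      split
      · next hjk =>
        rcases lt_trichotomy j (mOf γ ρ α σ) with h | h | h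
        · exact max_lt (lin_lt_dom_low hγ hρ hI h hu) hApos
        · exact absurd h hj
        · by_cases hjks : j = kstarOf σ
          · apply max_lt _ hApos
            have := lin_kstar_lt_one hγ hρ hI
              (hu2.trans_le (Delta_le hI ⟨m_lt_kstar hI, le_rfl⟩))
            rw [hjks]
            linarith
          · exact max_lt (lin_lt_dom hγ hρ hI h hjks
              (hu2.trans_le (Delta_le hI ⟨h, hjk⟩))) hApos
      · exact hApos
    exact absurd hval (ne_of_lt hlt)
  · rintro rfl
    rw [hy, if_pos (m_lt_kstar hI).le]
    have hz : ((mOf γ ρ α σ : ℤ) - (mOf γ ρ α σ : ℤ)) = 0 := sub_self _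
    rw [hz, lam_zero, y_m_eq hI, hdom]
    exact max_eq_left hApos.le

end Base

/-- For every `n` and every `t ∈ (s_n, s_{n+1})`, the index `m_n` is the
unique `j ∈ ℕ` with `y_j(t) = α + ρ t/γ`.  In particular, at every time `t ∈ [0, t*)` outside
the countable set `{s_n : n ≥ 0}` there is a unique dominant type. -/
theorem unique_dominant_type (γ ρ α : ℝ) (hγ : 0 < γ) (hρ : 0 ≤ ρ) (hα : 1 < α) :
    (∀ n : ℕ, ∀ t : ℝ, (state γ ρ α n).s < t → t < (state γ ρ α (n + 1)).s →
      ∀ j : ℕ, yAt γ ρ α j t = α + ρ * t / γ ↔ j = mOf γ ρ α (state γ ρ α n)) ∧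
    (∀ t : ℝ, 0 ≤ t → (∃ n : ℕ, t < (state γ ρ α n).s) →
      (∀ n : ℕ, t ≠ (state γ ρ α n).s) →
      ∃! j : ℕ, yAt γ ρ α j t = α + ρ * t / γ) := by
  constructor
  · intro n t h1 h2 j
    exact eval_interval hγ hρ hα n t h1 h2 j
  · rintro t ht ⟨N, hN⟩ hne
    have hne0 : {m : ℕ | t < (state γ ρ α (m + 1)).s}.Nonempty := by
      rcases N with _ | N
      · exact absurd hN (not_lt.mpr ht)
      · exact ⟨N, hN⟩
    have hn : idxAt γ ρ α t = sInf {m : ℕ | t < (state γ ρ α (m + 1)).s} := rfl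
    set n := idxAt γ ρ α t with hdefn
    have h2 : t < (state γ ρ α (n + 1)).s := Nat.sInf_mem hne0
    have h1 : (state γ ρ α n).s ≤ t := by
      rcases Nat.eq_zero_or_pos n with h | h
      · rw [h]; exact ht
      · have hlt : n - 1 < n := by omega
        have hmem : n - 1 ∉ {m : ℕ | t < (state γ ρ α (m + 1)).s} := by
          rw [hn] at hlt
          exact Nat.notMem_of_lt_sInf hlt
        simp only [Set.mem_setOf_eq, not_lt] at hmem
        have hx : n - 1 + 1 = n := by omega
        rwa [hx] at hmem
    have h1' : (state γ ρ α n).s < t := lt_of_le_of_ne h1 (Ne.symm (hne n))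
    refine ⟨mOf γ ρ α (state γ ρ α n),
      (eval_interval hγ hρ hα n t h1' h2 _).mpr rfl,
      fun j hj => (eval_interval hγ hρ hα n t h1' h2 j).mp hj⟩


end

end SelectiveSweeps
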